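/- arXiv:0801.4162 — 5 statements merged into one kernel-verified Lean document; each statement's English description precedes it below -/
import Mathlib

section
/- Let p be an odd prime, l ≥ 1 an integer, q = p^{2l}, and let χ be a multiplicative character of (ℤ/qℤ)^* with parameter t_χ ∈ ℤ/p^lℤ. Then for all a, b ∈ (ℤ/qℤ)^*, the twisted Kloosterman sum satisfies K_q(a,b,χ) = Σ_{x ∈ (ℤ/qℤ)^*, h(x) ≡ 0 mod p^l} e_q(ax + bx^{-1})χ(x), where h(x) = ax² + t_χ x − b; equivalently, K_q(a,b,χ) = p^l Σ_x e_q(ax + bx^{-1})χ(x) with x running over a set of representatives in (ℤ/qℤ)^* of the residues x mod p^l satisfying h(x) ≡ 0 mod p^l (the summand is independent of the choice of representative). -/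
/-!
Write `q = m²` with `m = p^l`. The units `1 + m u` (`u ∈ ℤ/mℤ`) form a copy of `ℤ/mℤ`,
and replacing `x` by `x (1 + m u)` multiplies the summand of `K_q(a,b,χ)` by
`e_m(u · (ax - bx⁻¹ + t_χ))`. Averaging over `u`, the additive characters kill every `x`
with `ax - bx⁻¹ + t_χ ≢ 0 (mod m)`, i.e. (multiplying by `x`) with `h(x) ≢ 0 (mod m)`.
-/

open Complex Finset

/-- The standard additive character `e_q(x) = exp(2πix/q)` of `ℤ/qℤ`. -/
noncomputable def eZMod (q : ℕ) (x : ZMod q) : ℂ :=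
  Complex.exp (2 * Real.pi * Complex.I * x.val / q)

/-- The twisted Kloosterman sum `K_q(a,b,χ) = ∑_{x ∈ (ℤ/qℤ)^*} e_q(ax + bx⁻¹)χ(x)`. -/
noncomputable def Kloos (q : ℕ) [NeZero q] (a b : ZMod q) (χ : MulChar (ZMod q) ℂ) : ℂ :=
  ∑ x : (ZMod q)ˣ,
    eZMod q (a * (x : ZMod q) + b * ((x⁻¹ : (ZMod q)ˣ) : ZMod q)) * χ (x : ZMod q)

lemma eZMod_eq_stdAddChar (q : ℕ) [NeZero q] (x : ZMod q) : eZMod q x = ZMod.stdAddChar x := by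
  rw [ZMod.stdAddChar_apply, ZMod.toCircle_apply]
  rfl

lemma ZMod.stdAddChar_natCast_mul {m n N : ℕ} [NeZero n] [NeZero N] (hN : N = m * n)
    (w : ZMod N) : stdAddChar ((m : ZMod N) * w) = stdAddChar (cast w : ZMod n) := by
  subst hN
  have hm : (m : ℂ) ≠ 0 := by exact_mod_cast left_ne_zero_of_mul (NeZero.ne (m * n))
  have hn : (n : ℂ) ≠ 0 := by exact_mod_cast NeZero.ne n
  conv_lhs => rw [← ZMod.natCast_zmod_val w, ← Nat.cast_mul]
  rw [cast_eq_val, stdAddChar_apply, stdAddChar_apply, toCircle_natCast, toCircle_natCast]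
  congr 1
  push_cast
  field_simp

theorem AddChar.sum_eq_sum_filter_of_mul_shift {G R R' : Type*} [Group G] [Fintype G]
    [CommRing R] [Fintype R] [DecidableEq R] [CommRing R'] [IsDomain R'] [CharZero R']
    {ψ : AddChar R R'} (hψ : ψ.IsPrimitive) (ε : R → G) (c : G → R) (f : G → R')
    (hf : ∀ u x, f (x * ε u) = f x * ψ (u * c x)) :
    ∑ x, f x = ∑ x with c x = 0, f x := by
  have hR : (Fintype.card R : R') ≠ 0 := Nat.cast_ne_zero.mpr Fintype.card_ne_zero
  refine mul_left_cancel₀ hR ?_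
  calc (Fintype.card R : R') * ∑ x, f x = ∑ u : R, ∑ x, f (x * ε u) := by
        simp only [Fintype.sum_equiv (Equiv.mulRight (ε _)) (fun x => f (x * ε _)) f
          (fun _ => rfl), sum_const, card_univ, nsmul_eq_mul]
    _ = ∑ x, f x * ∑ u, ψ (u * c x) := by
        simp only [hf, mul_sum]
        exact sum_comm
    _ = (Fintype.card R : R') * ∑ x with c x = 0, f x := by
        simp only [sum_mulShift _ hψ, mul_sum, sum_filter, mul_ite, mul_zero]
        exact sum_congr rfl fun x _ => by split_ifs <;> ring

def Units.oneAddOfSqEqZero {R : Type*} [CommRing R] {e : R} (he : e ^ 2 = 0) : Rˣ where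
  val := 1 + e
  inv := 1 - e
  val_inv := by linear_combination -he
  inv_val := by linear_combination -he

lemma Units.mul_sq_add_mul_sub_eq_zero_iff {R : Type*} [CommRing R] (a b t : R) (y : Rˣ) :
    a * y ^ 2 + t * y - b = 0 ↔ a * y - b * ↑y⁻¹ + t = 0 := by
  rw [show a * y ^ 2 + t * y - b = y * (a * y - b * ↑y⁻¹ + t) by
    linear_combination b * y.mul_inv, Units.mul_right_eq_zero]

namespace ZMod

variable {m N : ℕ}

lemma sq_natCast_mul_eq_zero (hN : N = m * m) (v : ZMod N) : ((m : ZMod N) * v) ^ 2 = 0 := by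
  rw [mul_pow, sq, ← Nat.cast_mul, ← hN, natCast_self, zero_mul]

def oneAddMulUnit (hN : N = m * m) (u : ZMod m) : (ZMod N)ˣ :=
  Units.oneAddOfSqEqZero (sq_natCast_mul_eq_zero hN u.val)

variable [NeZero N]

noncomputable def kloosTerm (a b : ZMod N) (χ : MulChar (ZMod N) ℂ) (x : (ZMod N)ˣ) : ℂ :=
  stdAddChar (a * (x : ZMod N) + b * (↑x⁻¹ : ZMod N)) * χ x

variable [NeZero m]

lemma kloosTerm_mul_oneAddMulUnit (hN : N = m * m) (χ : MulChar (ZMod N) ℂ) (t : ZMod m)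
    (ht : ∀ u : ZMod m, χ (1 + m * u.val) = stdAddChar (t * u)) (a b : ZMod N) (u : ZMod m)
    (x : (ZMod N)ˣ) :
    kloosTerm a b χ (x * oneAddMulUnit hN u) = kloosTerm a b χ x *
      stdAddChar (u * (castHom ⟨m, hN⟩ (ZMod m) (a * x - b * ↑x⁻¹) + t)) := by
  have hx : ((x * oneAddMulUnit hN u : (ZMod N)ˣ) : ZMod N) = x * (1 + m * u.val) := rfl
  have hxinv : (((x * oneAddMulUnit hN u)⁻¹ : (ZMod N)ˣ) : ZMod N) =
      ↑x⁻¹ * (1 - m * u.val) := by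
    rw [mul_inv, Units.val_mul]
    rfl
  rw [kloosTerm, kloosTerm, hx, hxinv, map_mul χ, ht u]
  set y : ZMod N := ↑x
  set z : ZMod N := ↑x⁻¹
  have harg : a * (y * (1 + m * u.val)) + b * (z * (1 - m * u.val)) =
      (a * y + b * z) + m * (u.val * (a * y - b * z)) := by
    ring
  have hcast : (cast ((u.val : ZMod N) * (a * y - b * z)) : ZMod m) =
      u * castHom ⟨m, hN⟩ (ZMod m) (a * y - b * z) := by
    rw [← castHom_apply (h := ⟨m, hN⟩), map_mul, map_natCast, natCast_zmod_val]
  rw [harg, AddChar.map_add_eq_mul, stdAddChar_natCast_mul hN, hcast, mul_comm t u, mul_add u,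
    AddChar.map_add_eq_mul stdAddChar (u * _)]
  ring

theorem sum_kloosTerm_eq_sum_filter (hN : N = m * m) (χ : MulChar (ZMod N) ℂ) (t : ZMod m)
    (ht : ∀ u : ZMod m, χ (1 + m * u.val) = stdAddChar (t * u)) (a b : ZMod N) :
    ∑ x, kloosTerm a b χ x = ∑ x ∈ univ.filter (fun x : (ZMod N)ˣ =>
      castHom ⟨m, hN⟩ (ZMod m) (a * (x : ZMod N) ^ 2 + t.val * x - b) = 0),
      kloosTerm a b χ x := by
  rw [AddChar.sum_eq_sum_filter_of_mul_shift (isPrimitive_stdAddChar m) (oneAddMulUnit hN) _ _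
    (kloosTerm_mul_oneAddMulUnit hN χ t ht a b)]
  refine sum_congr (filter_congr fun x _ => ?_) fun _ _ => rfl
  simp only [map_sub, map_add, map_mul, map_pow, map_natCast, natCast_zmod_val]
  exact (Units.mul_sq_add_mul_sub_eq_zero_iff _ _ t
    (Units.map (castHom ⟨m, hN⟩ (ZMod m)).toMonoidHom x)).symm

end ZMod

/-- For `q = p^{2l}` an even power of an odd prime and `χ` a multiplicative character
of `(ℤ/qℤ)^*` with parameter `t_χ ∈ ℤ/p^lℤ` (i.e. `χ(1 + p^l x) = e_{p^l}(t_χ x)`),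
the Kloosterman sum `K_q(a,b,χ)` equals the subsum over those units `x` with
`h(x) = ax² + t_χ x - b ≡ 0 (mod p^l)`. -/
theorem kloos_eq_even_power
    (p l : ℕ) [Fact p.Prime]
    (χ : MulChar (ZMod (p ^ (2 * l))) ℂ) (t : ZMod (p ^ l))
    (ht : ∀ x : ZMod (p ^ l),
      χ (1 + (p : ZMod (p ^ (2 * l))) ^ l * (x.val : ZMod (p ^ (2 * l)))) =
        eZMod (p ^ l) (t * x))
    (a b : (ZMod (p ^ (2 * l)))ˣ) :
    Kloos (p ^ (2 * l)) (a : ZMod (p ^ (2 * l))) (b : ZMod (p ^ (2 * l))) χ =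
      ∑ x ∈ Finset.univ.filter (fun x : (ZMod (p ^ (2 * l)))ˣ =>
          ZMod.castHom (pow_dvd_pow p (by omega : l ≤ 2 * l)) (ZMod (p ^ l))
            ((a : ZMod (p ^ (2 * l))) * (x : ZMod (p ^ (2 * l))) ^ 2 +
              (t.val : ZMod (p ^ (2 * l))) * (x : ZMod (p ^ (2 * l))) -
              (b : ZMod (p ^ (2 * l)))) = 0),
        eZMod (p ^ (2 * l))
            ((a : ZMod (p ^ (2 * l))) * (x : ZMod (p ^ (2 * l))) +
              (b : ZMod (p ^ (2 * l))) * ((x⁻¹ : (ZMod (p ^ (2 * l)))ˣ) : ZMod (p ^ (2 * l)))) *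
          χ (x : ZMod (p ^ (2 * l))) := by
  have hN : p ^ (2 * l) = p ^ l * p ^ l := by rw [two_mul, pow_add]
  simp only [eZMod_eq_stdAddChar, ← Nat.cast_pow] at ht
  simp only [Kloos, eZMod_eq_stdAddChar]
  exact ZMod.sum_kloosTerm_eq_sum_filter hN χ t ht a b
end

section
/- Let p be an odd prime, l ≥ 1 an integer, q = p^{2l+1}, and let χ be a multiplicative character of (ℤ/qℤ)^* with parameter t_χ ∈ ℤ/p^{l+1}ℤ. Let a, b ∈ (ℤ/qℤ)^* and set h(x) = ax² + t_χ x − b and d(x) = ((p−1)/2)·t_χ·x² + bx. Then K_q(a,b,χ) = p^l Σ_x e_q(a x̃ + b x̃^{-1}) χ(x̃) 𝒢(x̃), where x runs over the elements of (ℤ/p^lℤ)^* with h(x) ≡ 0 mod p^l, x̃ ∈ ℤ is any integer lifting x (the entire summand е_q(a x̃ + b x̃^{-1})χ(x̃)𝒢(x̃) is independent of the choice of lift), and 𝒢(x̃) is the Gauss sum 𝒢(x̃) = Σ_{y mod p} e_p(d(x̃) y² + p^{-l} h(x̃) y), in which h(x̃) ≡ 0 mod p^l so that p^{-l}h(x̃)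 is well defined modulo p. -/
open Complex Finset

/-- The integer `h(x̃) = a x̃² + t_χ x̃ - b` computed with the canonical integer lifts
of `a`, `b` (mod `q`) and `t_χ`. -/
def hInt (q : ℕ) (a b : ZMod q) (tv : ℕ) (x : ℕ) : ℤ :=
  (a.val : ℤ) * (x : ℤ) ^ 2 + (tv : ℤ) * (x : ℤ) - (b.val : ℤ)

/-- The integer `d(x̃) = ((p-1)/2)·t_χ·x̃² + b x̃`. -/
def dInt (p q : ℕ) (b : ZMod q) (tv : ℕ) (x : ℕ) : ℤ :=
  (((p - 1) / 2 : ℕ) : ℤ) * (tv : ℤ) * (x : ℤ) ^ 2 + (b.val : ℤ) * (x : ℤ)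

/-- The Gauss sum `𝒢 = ∑_{y mod p} e_p(c y² + e y)`. -/
noncomputable def gaussSum' (p : ℕ) [NeZero p] (c e : ℤ) : ℂ :=
  ∑ y : ZMod p, eZMod p ((c : ZMod p) * y ^ 2 + (e : ZMod p) * y)

noncomputable def eInt (q : ℕ) (k : ℤ) : ℂ :=
  eZMod q k

section eInt

variable {q : ℕ}

lemma eInt_add [NeZero q] (j k : ℤ) : eInt q (j + k) = eInt q j * eInt q k := by
  simp only [eInt, Int.cast_add, eZMod_eq_stdAddChar, AddChar.map_add_eq_mul]

lemma eInt_eq_of_dvd_sub {j k : ℤ} (h : (q : ℤ) ∣ k - j) : eInt q j = eInt q k := by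
  rw [eInt, eInt, (ZMod.intCast_eq_intCast_iff_dvd_sub j k q).2 h]

lemma eInt_mul_left [NeZero q] (m : ℕ) [NeZero m] (k : ℤ) :
    eInt (m * q) (m * k) = eInt q k := by
  have hm : (m : ℂ) ≠ 0 := NeZero.ne _
  simp only [eInt, eZMod_eq_stdAddChar, ZMod.stdAddChar_coe]
  congr 1
  push_cast
  field_simp

lemma sum_eInt_val_mul [NeZero q] (B : ℤ) :
    ∑ w : ZMod q, eInt q (w.val * B) = if (q : ℤ) ∣ B then (q : ℂ) else 0 := by
  simp only [eInt, eZMod_eq_stdAddChar, Int.cast_mul, Int.cast_natCast, ZMod.natCast_zmod_val,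
    AddChar.sum_mulShift _ (ZMod.isPrimitive_stdAddChar q), ZMod.intCast_zmod_eq_zero_iff_dvd,
    ZMod.card]
  split_ifs <;> simp

lemma gaussSum'_eq_sum_eInt [NeZero q] (c e : ℤ) :
    gaussSum' q c e = ∑ z : ZMod q, eInt q (c * z.val ^ 2 + e * z.val) := by
  simp [gaussSum', eInt]

lemma gaussSum'_eq_of_unit [NeZero q] {c e c' e' : ℤ} (m : (ZMod q)ˣ)
    (hc : (c' : ZMod q) = m ^ 2 * c) (he : (e' : ZMod q) = m * e) :
    gaussSum' q c e = gaussSum' q c' e' := by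
  rw [gaussSum', gaussSum', ← Equiv.sum_comp (Units.mulLeft m)]
  refine sum_congr rfl fun y _ => ?_
  rw [Units.mulLeft_apply, hc, he]
  ring_nf

end eInt

lemma sum_zmod_val {M : Type*} [AddCommMonoid M] (n : ℕ) [NeZero n] (f : ℕ → M) :
    ∑ y : ZMod n, f y.val = ∑ k ∈ range n, f k := by
  obtain ⟨n, rfl⟩ := Nat.exists_eq_succ_of_ne_zero (NeZero.ne n)
  exact Fin.sum_univ_eq_sum_range f _

lemma sum_zmod_mul_val {M : Type*} [AddCommMonoid M] (m n : ℕ) [NeZero m] [NeZero n]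
    (f : ℕ → M) :
    ∑ y : ZMod (m * n), f y.val = ∑ w : ZMod m, ∑ z : ZMod n, f (z.val + n * w.val) := by
  calc ∑ y : ZMod (m * n), f y.val
      = ∑ y : Fin m × Fin n, f (finProdFinEquiv y) := by
        rw [sum_zmod_val, ← Fin.sum_univ_eq_sum_range, finProdFinEquiv.sum_comp (fun y => f y)]
    _ = ∑ w ∈ range m, ∑ z ∈ range n, f (z + n * w) := by
        simp only [Fintype.sum_prod_type, finProdFinEquiv_apply_val]
        rw [Fin.sum_univ_eq_sum_range (fun w => ∑ z : Fin n, f (z + n * w))]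
        exact sum_congr rfl fun w _ => Fin.sum_univ_eq_sum_range (fun z => f (z + n * w)) n
    _ = _ := by
        rw [← sum_zmod_val m (fun w => ∑ z ∈ range n, f (z + n * w))]
        exact sum_congr rfl fun w _ => (sum_zmod_val n (fun z => f (z + n * w.val))).symm

lemma sum_eInt_quadratic (p l : ℕ) [NeZero p] (A B C : ℤ) :
    ∑ y : ZMod (p ^ (l + 1)),
        eInt (p ^ (2 * l + 1)) (A + p ^ l * B * y.val + p ^ (2 * l) * C * y.val ^ 2) =
      if (p : ℤ) ^ l ∣ B then p ^ l * eInt (p ^ (2 * l + 1)) A * gaussSum' p C (B / p ^ l)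
      else 0 := by
  have split_phase : ∀ z w : ℕ,
      eInt (p ^ (2 * l + 1)) (A + p ^ l * B * ((z + p * w : ℕ) : ℤ) +
          p ^ (2 * l) * C * ((z + p * w : ℕ) : ℤ) ^ 2) =
        eInt (p ^ (2 * l + 1)) (A + p ^ l * B * z + p ^ (2 * l) * C * z ^ 2) *
          eInt (p ^ l) (w * B) := by
    intro z w
    rw [← eInt_mul_left (p ^ (l + 1)) ((w : ℤ) * B), ← pow_add,
      show l + 1 + l = 2 * l + 1 by ring, ← eInt_add]
    refine eInt_eq_of_dvd_sub ⟨-(C * (2 * z * w + p * w ^ 2)), ?_⟩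
    push_cast
    ring
  calc _ = ∑ w : ZMod (p ^ l), ∑ z : ZMod p,
          eInt (p ^ (2 * l + 1)) (A + p ^ l * B * ((z.val + p * w.val : ℕ) : ℤ) +
            p ^ (2 * l) * C * ((z.val + p * w.val : ℕ) : ℤ) ^ 2) :=
        sum_zmod_mul_val (p ^ l) p fun k =>
          eInt (p ^ (2 * l + 1)) (A + p ^ l * B * k + p ^ (2 * l) * C * k ^ 2)
    _ = (∑ z : ZMod p,
          eInt (p ^ (2 * l + 1)) (A + p ^ l * B * z.val + p ^ (2 * l) * C * z.val ^ 2)) *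
          ∑ w : ZMod (p ^ l), eInt (p ^ l) (w.val * B) := by
        simp_rw [split_phase, sum_mul_sum]
        rw [sum_comm]
    _ = _ := by
        simp only [sum_eInt_val_mul, Nat.cast_pow]
        split_ifs with hB
        · obtain ⟨D, rfl⟩ := hB
          have hp : (p : ℤ) ^ l ≠ 0 := pow_ne_zero _ (by exact_mod_cast NeZero.ne p)
          rw [Int.mul_ediv_cancel_left _ hp, gaussSum'_eq_sum_eInt, mul_sum, sum_mul]
          refine sum_congr rfl fun z _ => ?_
          rw [← eInt_mul_left (p ^ (2 * l)) (C * z.val ^ 2 + D * z.val), ← pow_succ,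
            mul_assoc ((p : ℂ) ^ l), ← eInt_add, mul_comm]
          congr 2
          push_cast
          ring
        · rw [mul_zero]

lemma dvd_linear_iff_dvd_quadratic {n α β τ M M' : ℤ} (hM : n ∣ M * M' - 1) :
    n ∣ α * M - β * M' + τ ↔ n ∣ α * M ^ 2 + τ * M - β := by
  have hcop : IsCoprime M n := by
    obtain ⟨k, hk⟩ := hM
    exact ⟨M', -k, by linear_combination hk⟩
  have key : α * M ^ 2 + τ * M - β = M * (α * M - β * M' + τ) + β * (M * M' - 1) := by ring
  rw [key, dvd_add_left (hM.mul_left β)]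
  exact ⟨fun h => h.mul_left M, fun h => hcop.symm.dvd_of_dvd_mul_left h⟩

lemma gaussSum'_linear_eq_gaussSum'_quadratic {p l : ℕ} [NeZero p] (hp : Odd p) (hl : 1 ≤ l)
    {α β τ M M' ι : ℤ} (hM : (p : ℤ) ^ (l + 1) ∣ M * M' - 1) (hι : (p : ℤ) ∣ 2 * ι - 1)
    (hB : (p : ℤ) ^ l ∣ α * M - β * M' + τ) :
    gaussSum' p (ι * (α * M + β * M')) ((α * M - β * M' + τ) / p ^ l) =
      gaussSum' p (((p - 1) / 2 : ℕ) * τ * M ^ 2 + β * M) ((α * M ^ 2 + τ * M - β) / p ^ l) := by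
  have hMl : (p : ℤ) ^ l ∣ M * M' - 1 := (pow_dvd_pow _ l.le_succ).trans hM
  obtain ⟨D, hD⟩ := hB
  obtain ⟨e, he⟩ := (dvd_linear_iff_dvd_quadratic hMl).1 ⟨D, hD⟩
  obtain ⟨k, hk⟩ := hM
  have hpl : (p : ℤ) ^ l ≠ 0 := pow_ne_zero _ (by exact_mod_cast NeZero.ne p)
  rw [hD, he, Int.mul_ediv_cancel_left _ hpl, Int.mul_ediv_cancel_left _ hpl]
  have hMD : M * D - e = -(β * p * k) := by
    refine mul_left_cancel₀ hpl ?_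
    linear_combination -M * hD + he - β * hk
  have cast_zero : ∀ {z : ℤ}, (p : ℤ) ∣ z → (z : ZMod p) = 0 :=
    fun h => (ZMod.intCast_zmod_eq_zero_iff_dvd _ p).2 h
  have hMM' : (M * M' : ZMod p) = 1 := by
    have := cast_zero (z := M * M' - 1) ⟨p ^ l * k, by rw [hk]; ring⟩
    push_cast at this
    linear_combination this
  have hroot : (α * M ^ 2 + τ * M - β : ZMod p) = 0 := by
    have := cast_zero ((dvd_pow_self (p : ℤ) (Nat.one_le_iff_ne_zero.mp hl)).mul_right e)
    rw [← he] at this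
    push_cast at this
    exact this
  have hι2 : (2 * ι : ZMod p) = 1 := by
    have := cast_zero hι
    push_cast at this
    linear_combination this
  obtain ⟨m, hm⟩ := hp
  rw [show (p - 1) / 2 = m by omega]
  have hm2 : (2 * m : ZMod p) = -1 := by
    have : ((2 * m + 1 : ℕ) : ZMod p) = 0 := hm ▸ ZMod.natCast_self p
    push_cast at this
    linear_combination this
  have hMD' : (M * D : ZMod p) = e := by
    have := cast_zero (z := M * D - e) ⟨-(β * k), by linear_combination hMD⟩
    push_cast at this
    linear_combination this
  have hunit : IsUnit (M : ZMod p) := IsUnit.of_mul_eq_one _ hMM'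
  refine gaussSum'_eq_of_unit hunit.unit ?_ ?_ <;> rw [IsUnit.unit_spec] <;> push_cast
  · linear_combination (-(ι : ZMod p) * M) * hroot - (ι * β * M : ZMod p) * hMM'
      + (-(β * M : ZMod p) - m * τ * M ^ 2) * hι2 + (ι * τ * M ^ 2 : ZMod p) * hm2
  · linear_combination -hMD'

lemma exists_two_mul_sub_one_dvd {n : ℕ} (hn : Odd n) : ∃ ι : ℤ, (n : ℤ) ∣ 2 * ι - 1 := by
  obtain ⟨m, rfl⟩ := hn
  exact ⟨m + 1, 1, by push_cast; ring⟩

lemma isUnit_one_add_natCast_mul {n k : ℕ} (s : ZMod (n ^ k)) : IsUnit (1 + n * s) :=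
  ((Commute.all _ _).isNilpotent_mul_right
    ⟨k, by exact_mod_cast ZMod.natCast_self _⟩).isUnit_one_add

def truncExp (p l : ℕ) (y : ZMod (p ^ (l + 1))) : ZMod (p ^ (2 * l + 1)) :=
  1 + (p : ZMod (p ^ (2 * l + 1))) ^ l * (y.val : ZMod (p ^ (2 * l + 1))) +
    (p : ZMod (p ^ (2 * l + 1))) ^ (2 * l) *
      (((y ^ 2 * (2 : ZMod (p ^ (l + 1)))⁻¹).val : ZMod (p ^ (2 * l + 1))))

/-- An integer lift of `truncExp`, with `ι` standing for `1/2`. -/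
def truncExpInt (p l : ℕ) (ι X : ℤ) : ℤ :=
  1 + p ^ l * X + p ^ (2 * l) * ι * X ^ 2

section

variable {p l : ℕ}

lemma truncExp_eq_intCast [NeZero p] {ι : ℤ} (hι : (p : ℤ) ^ (l + 1) ∣ 2 * ι - 1)
    (y : ZMod (p ^ (l + 1))) :
    truncExp p l y = (truncExpInt p l ι y.val : ZMod (p ^ (2 * l + 1))) := by
  set w := (y ^ 2 * (2 : ZMod (p ^ (l + 1)))⁻¹).val
  have hι' : (ι : ZMod (p ^ (l + 1))) = 2⁻¹ := by
    refine (ZMod.inv_eq_of_mul_eq_one _ _ _ ?_).symm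
    have := (ZMod.intCast_zmod_eq_zero_iff_dvd _ _).2 (by exact_mod_cast hι)
    push_cast at this
    linear_combination this
  have hw : (p : ℤ) ^ (l + 1) ∣ ι * y.val ^ 2 - w := by
    have : ((w : ℤ) : ZMod (p ^ (l + 1))) = ((ι * y.val ^ 2 : ℤ) : ZMod (p ^ (l + 1))) := by
      push_cast
      rw [ZMod.natCast_zmod_val, ZMod.natCast_zmod_val, hι', mul_comm]
    exact_mod_cast (ZMod.intCast_eq_intCast_iff_dvd_sub _ _ _).1 this
  have : truncExp p l y =
      ((1 + p ^ l * y.val + p ^ (2 * l) * w : ℤ) : ZMod (p ^ (2 * l + 1))) := by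
    simp [truncExp, w]
  rw [this, truncExpInt, ZMod.intCast_eq_intCast_iff_dvd_sub]
  obtain ⟨k, hk⟩ := hw
  exact ⟨p ^ l * k, by push_cast; linear_combination (p : ℤ) ^ (2 * l) * hk⟩

lemma intCast_truncExpInt_mul_neg (hl : 1 ≤ l) {ι : ℤ} (hι : (p : ℤ) ∣ 2 * ι - 1) (X : ℤ) :
    (truncExpInt p l ι X : ZMod (p ^ (2 * l + 1))) * truncExpInt p l ι (-X) = 1 := by
  rw [← Int.cast_mul, ← Int.cast_one, ZMod.intCast_eq_intCast_iff_dvd_sub]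
  obtain ⟨k, hk⟩ := hι
  obtain ⟨l, rfl⟩ := Nat.exists_eq_add_of_le' hl
  refine ⟨-(k * X ^ 2 + p ^ (2 * l + 1) * ι ^ 2 * X ^ 4), ?_⟩
  simp only [truncExpInt]
  push_cast
  linear_combination (-(p : ℤ) ^ (2 * l + 2) * X ^ 2) * hk

lemma isUnit_truncExp (hl : 1 ≤ l) (y : ZMod (p ^ (l + 1))) : IsUnit (truncExp p l y) := by
  obtain ⟨l, rfl⟩ := Nat.exists_eq_add_of_le' hl
  convert isUnit_one_add_natCast_mul ((p : ZMod _) ^ l * (y.val : ZMod _) +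
    (p : ZMod _) ^ (2 * l + 1) * (((y ^ 2 * (2 : ZMod (p ^ (l + 1 + 1)))⁻¹).val : ZMod _)))
    using 1
  simp only [truncExp]
  ring

lemma castHom_truncExp (y : ZMod (p ^ (l + 1))) :
    ZMod.castHom (pow_dvd_pow p (by omega : l ≤ 2 * l + 1)) (ZMod (p ^ l)) (truncExp p l y) =
      1 := by
  have hp : (p : ZMod (p ^ l)) ^ l = 0 := by exact_mod_cast ZMod.natCast_self (p ^ l)
  simp only [truncExp, map_add, map_mul, map_pow, map_natCast, map_one]
  rw [two_mul, pow_add (p : ZMod (p ^ l)), hp]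
  ring

lemma truncExp_injective (hp : Odd p) (hl : 1 ≤ l) : Function.Injective (truncExp p l) := by
  have : NeZero p := ⟨hp.pos.ne'⟩
  intro y y' h
  obtain ⟨ι, hι⟩ := exists_two_mul_sub_one_dvd (hp.pow (n := l + 1))
  push_cast at hι
  rw [truncExp_eq_intCast hι, truncExp_eq_intCast hι, ZMod.intCast_eq_intCast_iff_dvd_sub] at h
  have hfactor : truncExpInt p l ι y'.val - truncExpInt p l ι y.val =
      p ^ l * ((y'.val - y.val : ℤ) * (1 + p ^ l * ι * (y.val + y'.val))) := by
    simp only [truncExpInt]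
    ring
  rw [hfactor, show 2 * l + 1 = l + (l + 1) by ring, Nat.cast_pow, pow_add,
    mul_dvd_mul_iff_left (pow_ne_zero _ (by exact_mod_cast hp.pos.ne'))] at h
  obtain ⟨l, rfl⟩ := Nat.exists_eq_add_of_le' hl
  have hcop : IsCoprime ((p : ℤ) ^ (l + 1 + 1)) (1 + p ^ (l + 1) * ι * (y.val + y'.val)) :=
    IsCoprime.pow_left ⟨-(p ^ l * ι * (y.val + y'.val)), 1, by ring⟩
  have := (ZMod.intCast_eq_intCast_iff_dvd_sub (y.val : ℤ) y'.val _).2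
    (by exact_mod_cast hcop.dvd_of_dvd_mul_right h)
  simpa using this

lemma isUnit_natCast_val (hl : 1 ≤ l) (u : (ZMod (p ^ l))ˣ) (k : ℕ) :
    IsUnit (((u : ZMod (p ^ l)).val : ℕ) : ZMod (p ^ k)) :=
  (ZMod.isUnit_iff_coprime _ _).2 <|
    ((ZMod.val_coe_unit_coprime u).coprime_dvd_right (dvd_pow_self p (by omega))).pow_right k

noncomputable def unitParam (hl : 1 ≤ l) (uy : (ZMod (p ^ l))ˣ × ZMod (p ^ (l + 1))) :
    (ZMod (p ^ (2 * l + 1)))ˣ :=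
  (isUnit_natCast_val hl uy.1 _).unit * (isUnit_truncExp hl uy.2).unit

lemma coe_unitParam (hl : 1 ≤ l) (u : (ZMod (p ^ l))ˣ) (y : ZMod (p ^ (l + 1))) :
    (unitParam hl (u, y) : ZMod (p ^ (2 * l + 1))) =
      ((u : ZMod (p ^ l)).val : ZMod (p ^ (2 * l + 1))) * truncExp p l y := by
  simp [unitParam]

lemma unitParam_injective (hp : Odd p) (hl : 1 ≤ l) :
    Function.Injective (unitParam (p := p) hl) := by
  have : NeZero p := ⟨hp.pos.ne'⟩
  rintro ⟨u, y⟩ ⟨u', y'⟩ h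
  have h' := congrArg (fun x : (ZMod (p ^ (2 * l + 1)))ˣ => (x : ZMod (p ^ (2 * l + 1)))) h
  simp only [coe_unitParam] at h'
  obtain rfl : u = u' := by
    have := congrArg (ZMod.castHom (pow_dvd_pow p (by omega : l ≤ 2 * l + 1)) (ZMod (p ^ l))) h'
    simp only [map_mul, map_natCast, castHom_truncExp, mul_one, ZMod.natCast_zmod_val] at this
    exact Units.ext this
  rw [truncExp_injective hp hl ((isUnit_natCast_val hl u _).mul_left_cancel h')]

lemma card_units_prod_eq [Fact p.Prime] (hl : 1 ≤ l) :
    Fintype.card ((ZMod (p ^ l))ˣ × ZMod (p ^ (l + 1))) =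
      Fintype.card (ZMod (p ^ (2 * l + 1)))ˣ := by
  have hp : p.Prime := Fact.out
  rw [Fintype.card_prod, ZMod.card_units_eq_totient, ZMod.card_units_eq_totient, ZMod.card,
    Nat.totient_prime_pow hp (by omega), Nat.totient_prime_pow hp (by omega),
    show 2 * l + 1 - 1 = (l - 1) + (l + 1) by omega, pow_add]
  ring

lemma unitParam_bijective [Fact p.Prime] (hodd : p ≠ 2) (hl : 1 ≤ l) :
    Function.Bijective (unitParam (p := p) hl) :=
  (Fintype.bijective_iff_injective_and_card _).2
    ⟨unitParam_injective ((Fact.out : p.Prime).odd_of_ne_two hodd) hl, card_units_prod_eq hl⟩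

lemma kloosterman_summand_eq [NeZero p] (hl : 1 ≤ l) {ι : ℤ}
    (hι : (p : ℤ) ^ (l + 1) ∣ 2 * ι - 1) {χ : MulChar (ZMod (p ^ (2 * l + 1))) ℂ}
    {t : ZMod (p ^ (l + 1))} (ht : ∀ y, χ (truncExp p l y) = eZMod (p ^ (l + 1)) (t * y))
    {a b : ZMod (p ^ (2 * l + 1))} {α β τ M M' : ℤ} (hα : (α : ZMod (p ^ (2 * l + 1))) = a)
    (hβ : (β : ZMod (p ^ (2 * l + 1))) = b) (hτ : (τ : ZMod (p ^ (l + 1))) = t)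
    (hM : (M * M' : ZMod (p ^ (2 * l + 1))) = 1)
    {x : (ZMod (p ^ (2 * l + 1)))ˣ} {y : ZMod (p ^ (l + 1))}
    (hx : (x : ZMod (p ^ (2 * l + 1))) = M * truncExp p l y) :
    eZMod (p ^ (2 * l + 1)) (a * x + b * (x⁻¹ : (ZMod (p ^ (2 * l + 1)))ˣ)) * χ x =
      χ M * eInt (p ^ (2 * l + 1)) ((α * M + β * M') + p ^ l * (α * M - β * M' + τ) * y.val +
        p ^ (2 * l) * (ι * (α * M + β * M')) * y.val ^ 2) := by
  have hT := truncExp_eq_intCast hι y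
  have hxinv : ((x⁻¹ : (ZMod (p ^ (2 * l + 1)))ˣ) : ZMod (p ^ (2 * l + 1))) =
      ((M' * truncExpInt p l ι (-y.val) : ℤ) : ZMod (p ^ (2 * l + 1))) := by
    refine Units.inv_eq_of_mul_eq_one_right ?_
    rw [hx, hT, Int.cast_mul]
    linear_combination (↑M * ↑M' : ZMod (p ^ (2 * l + 1))) *
      intCast_truncExpInt_mul_neg hl ((dvd_pow_self _ l.succ_ne_zero).trans hι) y.val + hM
  have hχ : χ x = χ M * eInt (p ^ (2 * l + 1)) (p ^ l * (τ * y.val)) := by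
    have h := eInt_mul_left (q := p ^ (l + 1)) (p ^ l) (τ * y.val)
    rw [← pow_add, show l + (l + 1) = 2 * l + 1 by ring, Nat.cast_pow] at h
    rw [hx, map_mul, ht, h, eInt, Int.cast_mul, hτ, Int.cast_natCast, ZMod.natCast_zmod_val]
  have hphase : eZMod (p ^ (2 * l + 1)) (a * x + b * (x⁻¹ : (ZMod (p ^ (2 * l + 1)))ˣ)) =
      eInt (p ^ (2 * l + 1))
        (α * (M * truncExpInt p l ι y.val) + β * (M' * truncExpInt p l ι (-y.val))) := by
    rw [eInt, hxinv, hx, hT, ← hα, ← hβ]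
    push_cast
    rfl
  rw [hphase, hχ, mul_left_comm, ← eInt_add]
  congr 2
  simp only [truncExpInt]
  ring

lemma sum_kloosterman_fiber [Fact p.Prime] (hodd : p ≠ 2) (hl : 1 ≤ l)
    {χ : MulChar (ZMod (p ^ (2 * l + 1))) ℂ} {t : ZMod (p ^ (l + 1))}
    (ht : ∀ y, χ (truncExp p l y) = eZMod (p ^ (l + 1)) (t * y))
    (a b : ZMod (p ^ (2 * l + 1))) (u : (ZMod (p ^ l))ˣ) :
    ∑ y : ZMod (p ^ (l + 1)),
        eZMod (p ^ (2 * l + 1)) (a * unitParam hl (u, y) +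
          b * ((unitParam hl (u, y))⁻¹ : (ZMod (p ^ (2 * l + 1)))ˣ)) * χ (unitParam hl (u, y)) =
      (p : ℂ) ^ l *
        if (p : ℤ) ^ l ∣ hInt (p ^ (2 * l + 1)) a b t.val (u : ZMod (p ^ l)).val then
          eZMod (p ^ (2 * l + 1)) (a * ((u : ZMod (p ^ l)).val : ZMod (p ^ (2 * l + 1))) +
              b * ((u : ZMod (p ^ l)).val : ZMod (p ^ (2 * l + 1)))⁻¹) *
            χ ((u : ZMod (p ^ l)).val : ZMod (p ^ (2 * l + 1))) *
            gaussSum' p (dInt p (p ^ (2 * l + 1)) b t.val (u : ZMod (p ^ l)).val)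
              (hInt (p ^ (2 * l + 1)) a b t.val (u : ZMod (p ^ l)).val / (p : ℤ) ^ l)
        else 0 := by
  have hp : Odd p := (Fact.out : p.Prime).odd_of_ne_two hodd
  obtain ⟨ι, hι⟩ := exists_two_mul_sub_one_dvd (hp.pow (n := l + 1))
  push_cast at hι
  set M := (u : ZMod (p ^ l)).val
  set M' := ((M : ZMod (p ^ (2 * l + 1)))⁻¹).val
  have hM : (((M : ℤ) * M' : ℤ) : ZMod (p ^ (2 * l + 1))) = 1 := by
    push_cast
    rw [ZMod.natCast_zmod_val]
    exact ZMod.mul_inv_of_unit _ (isUnit_natCast_val hl u _)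
  have hMq : (p : ℤ) ^ (2 * l + 1) ∣ M * M' - 1 := by
    have := (ZMod.intCast_eq_intCast_iff_dvd_sub 1 _ _).1 (hM.trans Int.cast_one.symm).symm
    push_cast at this
    exact this
  have hMl : (p : ℤ) ^ (l + 1) ∣ M * M' - 1 := (pow_dvd_pow _ (by omega)).trans hMq
  have hMl' : (p : ℤ) ^ l ∣ M * M' - 1 := (pow_dvd_pow _ l.le_succ).trans hMl
  rw [sum_congr rfl fun y _ => kloosterman_summand_eq hl hι ht (α := (a.val : ℤ))
    (β := (b.val : ℤ)) (τ := (t.val : ℤ)) (by simp) (by simp) (by simp)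
    (by rw [← Int.cast_mul, hM]) (x := unitParam hl (u, y)) (y := y)
    (by rw [coe_unitParam, Int.cast_natCast]), ← mul_sum, sum_eInt_quadratic]
  by_cases h : (p : ℤ) ^ l ∣ hInt (p ^ (2 * l + 1)) a b t.val M
  · rw [if_pos ((dvd_linear_iff_dvd_quadratic hMl').2 h), if_pos h,
      gaussSum'_linear_eq_gaussSum'_quadratic hp hl hMl ((dvd_pow_self _ l.succ_ne_zero).trans hι)
        ((dvd_linear_iff_dvd_quadratic hMl').2 h)]
    have hA : eInt (p ^ (2 * l + 1)) (a.val * M + b.val * M') =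
        eZMod (p ^ (2 * l + 1)) (a * M + b * (M : ZMod (p ^ (2 * l + 1)))⁻¹) := by
      simp [eInt, M']
    rw [hA, hInt, dInt, Int.cast_natCast]
    ring
  · rw [if_neg (mt (dvd_linear_iff_dvd_quadratic hMl').1 h), if_neg h, mul_zero, mul_zero]

end

/-- For `q = p^{2l+1}` an odd power of an odd prime and `χ` a character with parameter
`t_χ ∈ ℤ/p^{l+1}ℤ`, the Kloosterman sum `K_q(a,b,χ)` equals
`p^l ∑_x e_q(a x̃ + b x̃⁻¹) χ(x̃) 𝒢(x̃)`, the sum being over `x ∈ (ℤ/p^lℤ)^*` with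
`h(x) ≡ 0 (mod p^l)`, where `x̃` is the canonical lift of `x`,
`h(x) = ax² + t_χ x - b`, and `𝒢(x̃) = ∑_{y mod p} e_p(d(x̃)y² + p^{-l}h(x̃)y)` with
`d(x) = ((p-1)/2) t_χ x² + bx`. -/
theorem kloos_eq_odd_power
    (p l : ℕ) [Fact p.Prime] (hodd : p ≠ 2) (hl : 1 ≤ l)
    (χ : MulChar (ZMod (p ^ (2 * l + 1))) ℂ) (t : ZMod (p ^ (l + 1)))
    (ht : ∀ x : ZMod (p ^ (l + 1)),
      χ (1 + (p : ZMod (p ^ (2 * l + 1))) ^ l * (x.val : ZMod (p ^ (2 * l + 1))) +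
          (p : ZMod (p ^ (2 * l + 1))) ^ (2 * l) *
            (((x ^ 2 * (2 : ZMod (p ^ (l + 1)))⁻¹).val : ZMod (p ^ (2 * l + 1))))) =
        eZMod (p ^ (l + 1)) (t * x))
    (a b : (ZMod (p ^ (2 * l + 1)))ˣ) :
    Kloos (p ^ (2 * l + 1)) (a : ZMod (p ^ (2 * l + 1))) (b : ZMod (p ^ (2 * l + 1))) χ =
      (p : ℂ) ^ l *
        ∑ x ∈ Finset.univ.filter (fun x : (ZMod (p ^ l))ˣ =>
            (p : ℤ) ^ l ∣
              hInt (p ^ (2 * l + 1)) (a : ZMod (p ^ (2 * l + 1))) (b : ZMod (p ^ (2 * l + 1)))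
                t.val (x : ZMod (p ^ l)).val),
          eZMod (p ^ (2 * l + 1))
              ((a : ZMod (p ^ (2 * l + 1))) * (((x : ZMod (p ^ l)).val : ZMod (p ^ (2 * l + 1)))) +
                (b : ZMod (p ^ (2 * l + 1))) *
                  (((x : ZMod (p ^ l)).val : ZMod (p ^ (2 * l + 1))))⁻¹) *
            χ (((x : ZMod (p ^ l)).val : ZMod (p ^ (2 * l + 1)))) *
            gaussSum' p
              (dInt p (p ^ (2 * l + 1)) (b : ZMod (p ^ (2 * l + 1))) t.val (x : ZMod (p ^ l)).val)
              (hInt (p ^ (2 * l + 1)) (a : ZMod (p ^ (2 * l + 1))) (b : ZMod (p ^ (2 * l + 1)))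
                  t.val (x : ZMod (p ^ l)).val / (p : ℤ) ^ l) := by
  rw [Kloos, ← Fintype.sum_bijective _ (unitParam_bijective hodd hl) _ _ fun _ => rfl,
    Fintype.sum_prod_type, sum_filter, mul_sum]
  exact sum_congr rfl fun u _ => sum_kloosterman_fiber hodd hl ht _ _ u
end

section
/- Let p be an odd prime, k ≥ 2, and q = p^k. Then for every a, b ∈ (ℤ/qℤ)^*, the untwisted Kloosterman sum satisfies |K_q(a,b,1)| ≤ 2√q, where 1 denotes the trivial multiplicative character of (ℤ/qℤ)^*. -/
open Complex Finset

/-!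
Write `q = p ^ (m + n)` with `m ≤ n ≤ 2 * m`. The translations `x ↦ x + p ^ m * y` permute the
units, so `q * K` is the sum over units `x` of the averages over `y ∈ ℤ/qℤ`. Since
`p ^ (3 * m) = 0`, we have `(x + p ^ m * y)⁻¹ = x⁻¹ - p ^ m * y * x⁻² + p ^ (2 * m) * y ^ 2 * x⁻³`,
so each average is a quadratic exponential sum in `y`. Weyl differencing bounds it by
`p ^ m * √q` and shows that it vanishes unless `a * x ^ 2 ≡ b [mod p ^ m]`. As `p` is odd, `ℤ/qℤ`
is local and `2` is a unit, so this congruence has at most `2 * p ^ n` unit solutions modulo `q`,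
whence `q * ‖K‖ ≤ 2 * q * √q`.
-/

open ComplexConjugate

section QuadraticSum

variable {R : Type*} [CommRing R] [Fintype R]

noncomputable def quadraticSum (ψ : AddChar R ℂ) (α β : R) : ℂ :=
  ∑ y, ψ (α * y + β * y ^ 2)

variable [DecidableEq R]

theorem AddChar.sum_filter_mul_eq_zero_eq_zero (ψ : AddChar R ℂ) {γ h₀ : R} (hh₀ : γ * h₀ = 0)
    (hne : ψ h₀ ≠ 1) : ∑ h with γ * h = 0, ψ h = 0 := by
  have hshift : ψ h₀ * ∑ h with γ * h = 0, ψ h = ∑ h with γ * h = 0, ψ h := by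
    rw [Finset.mul_sum]
    refine Finset.sum_equiv (Equiv.addLeft h₀) (fun h => by simp [mul_add, hh₀]) fun h _ => ?_
    simp [AddChar.map_add_eq_mul]
  have : (ψ h₀ - 1) * ∑ h with γ * h = 0, ψ h = 0 := by rw [sub_mul, hshift, one_mul, sub_self]
  exact (mul_eq_zero.mp this).resolve_left (sub_ne_zero.mpr hne)

variable {ψ : AddChar R ℂ}

-- Weyl differencing: after `y = z + h` the phase difference is linear in `z`,
-- so the sum over `z` detects `2 * β * h = 0`.
theorem quadraticSum_mul_conj (hψ : ψ.IsPrimitive) (α β : R) :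
    quadraticSum ψ α β * conj (quadraticSum ψ α β) =
      Fintype.card R * ∑ h with 2 * β * h = 0, ψ (α * h + β * h ^ 2) := by
  have hdiff : ∀ z h, ψ (α * (z + h) + β * (z + h) ^ 2) * ψ (-(α * z + β * z ^ 2)) =
      ψ (α * h + β * h ^ 2) * ψ (z * (2 * β * h)) := by
    intro z h
    rw [← AddChar.map_add_eq_mul, ← AddChar.map_add_eq_mul]
    ring_nf
  calc quadraticSum ψ α β * conj (quadraticSum ψ α β)
      = ∑ z, ∑ h, ψ (α * (z + h) + β * (z + h) ^ 2) * ψ (-(α * z + β * z ^ 2)) := by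
        simp only [quadraticSum, map_sum, ← AddChar.map_neg_eq_conj, Finset.sum_mul_sum]
        rw [Finset.sum_comm]
        exact Finset.sum_congr rfl fun z _ => (Equiv.sum_comp (Equiv.addLeft z)
          fun y => ψ (α * y + β * y ^ 2) * ψ (-(α * z + β * z ^ 2))).symm
      _ = ∑ h, ψ (α * h + β * h ^ 2) * ∑ z, ψ (z * (2 * β * h)) := by
        simp_rw [hdiff, Finset.mul_sum]
        exact Finset.sum_comm
      _ = _ := by
        simp_rw [AddChar.sum_mulShift _ hψ, Finset.mul_sum, Finset.sum_filter]
        refine Finset.sum_congr rfl fun h _ => ?_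
        split_ifs <;> simp [mul_comm]

theorem norm_quadraticSum_sq_le (hψ : ψ.IsPrimitive) (α β : R) :
    ‖quadraticSum ψ α β‖ ^ 2 ≤ Fintype.card R * #{h | 2 * β * h = 0} := by
  have h := congrArg norm (quadraticSum_mul_conj hψ α β)
  rw [Complex.mul_conj', norm_mul, Complex.norm_natCast, norm_pow, Complex.norm_real,
    norm_norm] at h
  rw [h]
  gcongr
  refine (norm_sum_le _ _).trans_eq ?_
  simp [AddChar.norm_apply]

theorem apply_eq_one_of_quadraticSum_ne_zero (hψ : ψ.IsPrimitive) (h2 : IsUnit (2 : R))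
    {α β h : R} (hS : quadraticSum ψ α β ≠ 0) (hh : β * h = 0) : ψ (α * h) = 1 := by
  by_contra hne
  have hsum : ∑ h' with 2 * β * h' = 0, ψ (α * h' + β * h' ^ 2) =
      ∑ h' with β * h' = 0, ψ.mulShift α h' := by
    simp_rw [mul_assoc (2 : R), h2.mul_right_eq_zero]
    refine Finset.sum_congr rfl fun h' hh' => ?_
    rw [Finset.mem_filter] at hh'
    rw [AddChar.mulShift_apply, sq, ← mul_assoc, hh'.2, zero_mul, add_zero]
  have hconj := quadraticSum_mul_conj hψ α β
  rw [hsum, AddChar.sum_filter_mul_eq_zero_eq_zero _ hh (by rwa [AddChar.mulShift_apply]),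
    mul_zero, mul_eq_zero, map_eq_zero, or_self] at hconj
  exact hS hconj

end QuadraticSum

section CommRing

variable {R M : Type*} [CommRing R] [AddCommMonoid M]

theorem sum_units_add_of_isNilpotent [Fintype Rˣ] {r : R} (hr : IsNilpotent r) (f : R → M) :
    ∑ x : Rˣ, f (x + r) = ∑ x : Rˣ, f x := by
  refine Fintype.sum_bijective (fun x => (hr.isUnit_add_left_of_commute x.isUnit (.all _ _)).unit)
    ?_ _ _ fun x => rfl
  exact Finite.injective_iff_bijective.mp fun x y hxy =>
    Units.ext (add_right_cancel (congrArg Units.val hxy))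

theorem card_smul_sum_units_eq_sum_add_mul [Fintype R] [Fintype Rˣ] {π : R} (hπ : IsNilpotent π)
    (f : R → M) :
    Fintype.card R • ∑ x : Rˣ, f x = ∑ x : Rˣ, ∑ y, f (x + π * y) := by
  rw [Finset.sum_comm, ← Finset.card_univ, ← Finset.sum_const]
  exact Finset.sum_congr rfl fun y _ =>
    (sum_units_add_of_isNilpotent (Commute.isNilpotent_mul_right (.all _ _) hπ) f).symm

theorem add_mul_truncated_inv_eq_one {x v e : R} (hxv : x * v = 1) (he : e ^ 3 = 0) :
    (x + e) * (v - e * v ^ 2 + e ^ 2 * v ^ 3) = 1 := by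
  linear_combination (1 - e * v + e ^ 2 * v ^ 2) * hxv + v ^ 3 * he

variable [IsLocalRing R]

theorem mul_sub_eq_zero_or_mul_add_eq_zero (h2 : IsUnit (2 : R)) {γ x y : R} (hx : IsUnit x)
    (h : γ * (x ^ 2 - y ^ 2) = 0) : γ * (x - y) = 0 ∨ γ * (x + y) = 0 := by
  have hfac : γ * (x - y) * (x + y) = 0 := by linear_combination h
  have hsum : IsUnit ((x - y) + (x + y)) := by
    rw [show (x - y) + (x + y) = 2 * x by ring]
    exact h2.mul hx
  rcases IsLocalRing.isUnit_or_isUnit_of_isUnit_add hsum with hu | hu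
  · right
    rw [mul_right_comm] at hfac
    exact hu.mul_left_eq_zero.mp hfac
  · left
    exact hu.mul_left_eq_zero.mp hfac

theorem card_units_filter_mul_sq_sub_le [Fintype R] [DecidableEq R] [Fintype Rˣ]
    (h2 : IsUnit (2 : R)) {a : R} (ha : IsUnit a) (γ b : R) :
    #{x : Rˣ | γ * (a * x ^ 2 - b) = 0} ≤ 2 * #{h : R | γ * h = 0} := by
  obtain h | ⟨x₀, hx₀⟩ := Finset.eq_empty_or_nonempty {x : Rˣ | γ * (a * x ^ 2 - b) = 0}
  · simp [h]
  set K : Finset R := {h | γ * h = 0}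
  calc #{x : Rˣ | γ * (a * x ^ 2 - b) = 0}
      ≤ #(K.image ((x₀ : R) + ·) ∪ K.image (-(x₀ : R) + ·)) := by
        refine Finset.card_le_card_of_injOn Units.val (fun x hx => ?_) Units.val_injective.injOn
        simp only [Finset.mem_coe, Finset.mem_filter, Finset.mem_univ, true_and] at hx hx₀
        have hsq : γ * ((x : R) ^ 2 - (x₀ : R) ^ 2) = 0 :=
          ha.mul_right_eq_zero.mp (by linear_combination hx - hx₀)
        rw [Finset.mem_coe, Finset.mem_union, Finset.mem_image, Finset.mem_image]
        rcases mul_sub_eq_zero_or_mul_add_eq_zero h2 x.isUnit hsq with h | h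
        · exact .inl ⟨_, Finset.mem_filter.mpr ⟨Finset.mem_univ _, h⟩, by ring⟩
        · exact .inr ⟨_, Finset.mem_filter.mpr ⟨Finset.mem_univ _, h⟩, by ring⟩
    _ ≤ 2 * #K := (Finset.card_union_le _ _).trans (by
        linarith [Finset.card_image_le (s := K) (f := ((x₀ : R) + ·)),
          Finset.card_image_le (s := K) (f := (-(x₀ : R) + ·))])

end CommRing

namespace ZMod

theorem isLocalRing_prime_pow (p : ℕ) [Fact p.Prime] {k : ℕ} (hk : k ≠ 0) :
    IsLocalRing (ZMod (p ^ k)) :=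
  have : Nontrivial (ZMod (p ^ k)) :=
    nontrivial_iff.mpr (Nat.pow_eq_one.not.mpr (by simp [hk, (Fact.out : p.Prime).ne_one]))
  IsLocalRing.of_surjective' (PadicInt.toZModPow k) (ringHom_surjective _)

theorem isUnit_two_prime_pow {p : ℕ} [Fact p.Prime] (hp : p ≠ 2) (k : ℕ) :
    IsUnit (2 : ZMod (p ^ k)) := by
  simpa using (isUnit_iff_coprime 2 (p ^ k)).mpr
    (Nat.coprime_two_left.mpr ((Fact.out : p.Prime).odd_of_ne_two hp).pow)

theorem card_filter_natCast_mul_eq_zero_le (N : ℕ) [NeZero N] {d : ℕ} (hd : 0 < d) :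
    #{h : ZMod N | (d : ZMod N) * h = 0} ≤ d := by
  simpa [nsmul_eq_mul] using IsAddCyclic.card_nsmul_eq_zero_le (α := ZMod N) hd

theorem eq_zero_of_forall_stdAddChar_mul_eq_one {N : ℕ} [NeZero N] {c : ZMod N}
    (h : ∀ z, stdAddChar (c * z) = 1) : c = 0 :=
  injective_stdAddChar (by simpa using h 1)

theorem sum_stdAddChar_translate_eq_mul_quadraticSum {N : ℕ} [NeZero N] (a b : ZMod N)
    {x v π : ZMod N} (hxv : x * v = 1) (hπ : π ^ 3 = 0) :
    ∑ y, stdAddChar (a * (x + π * y) + b * (x + π * y)⁻¹) =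
      stdAddChar (a * x + b * v) *
        quadraticSum stdAddChar (π * (a - b * v ^ 2)) (π ^ 2 * (b * v ^ 3)) := by
  rw [quadraticSum, Finset.mul_sum]
  refine Finset.sum_congr rfl fun y _ => ?_
  have hinv : (x + π * y)⁻¹ = v - π * y * v ^ 2 + (π * y) ^ 2 * v ^ 3 :=
    ZMod.inv_eq_of_mul_eq_one _ _ _
      (add_mul_truncated_inv_eq_one hxv (by rw [mul_pow, hπ, zero_mul]))
  rw [hinv, ← AddChar.map_add_eq_mul]
  ring_nf

theorem norm_quadraticSum_natCast_sq_mul_le {N : ℕ} [NeZero N] (h2 : IsUnit (2 : ZMod N))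
    {t : ℕ} (ht : 0 < t) (α : ZMod N) {d : ZMod N} (hd : IsUnit d) :
    ‖quadraticSum stdAddChar α ((t : ZMod N) ^ 2 * d)‖ ≤ t * √N := by
  have hker : #{h : ZMod N | 2 * ((t : ZMod N) ^ 2 * d) * h = 0} =
      #{h : ZMod N | ((t ^ 2 : ℕ) : ZMod N) * h = 0} := by
    refine congrArg _ (Finset.filter_congr fun h _ => ?_)
    rw [show 2 * ((t : ZMod N) ^ 2 * d) * h = (2 * d) * ((t ^ 2 : ℕ) * h) by push_cast; ring,
      (h2.mul hd).mul_right_eq_zero]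
  have hsq := norm_quadraticSum_sq_le (isPrimitive_stdAddChar N) α ((t : ZMod N) ^ 2 * d)
  rw [ZMod.card, hker] at hsq
  have hcard : (#{h : ZMod N | ((t ^ 2 : ℕ) : ZMod N) * h = 0} : ℝ) ≤ t ^ 2 := by
    exact_mod_cast card_filter_natCast_mul_eq_zero_le N (pow_pos ht 2)
  calc ‖quadraticSum stdAddChar α ((t : ZMod N) ^ 2 * d)‖
      = √(‖quadraticSum stdAddChar α ((t : ZMod N) ^ 2 * d)‖ ^ 2) :=
        (Real.sqrt_sq (norm_nonneg _)).symm
    _ ≤ √(t ^ 2 * N) := Real.sqrt_le_sqrt (by nlinarith)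
    _ = t * √N := by rw [Real.sqrt_mul (by positivity), Real.sqrt_sq (by positivity)]

end ZMod

theorem Kloos_one_eq (N : ℕ) [NeZero N] (a b : ZMod N) :
    Kloos N a b 1 = ∑ x : (ZMod N)ˣ, ZMod.stdAddChar (a * (x : ZMod N) + b * (x : ZMod N)⁻¹) := by
  refine Finset.sum_congr rfl fun x _ => ?_
  rw [MulChar.one_apply_coe, mul_one, ZMod.inv_coe_unit, eZMod, ZMod.stdAddChar_apply,
    ZMod.toCircle_apply]

section PrimePower

open ZMod

variable {p m n : ℕ}

local notation "Zq" => ZMod (p ^ (m + n))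

theorem natCast_pow_cube_eq_zero (hnm : n ≤ 2 * m) : ((p : Zq) ^ m) ^ 3 = 0 := by
  rw [← pow_mul]
  exact pow_eq_zero_of_le (show m + n ≤ m * 3 by omega)
    (by exact_mod_cast natCast_self (p ^ (m + n)))

variable [Fact p.Prime]

theorem pow_mul_eq_zero_of_quadraticSum_ne_zero (h2 : IsUnit (2 : Zq)) (hmn : m ≤ n) {c d : Zq}
    (hS : quadraticSum stdAddChar ((p : Zq) ^ m * c) (((p : Zq) ^ m) ^ 2 * d) ≠ 0) :
    (p : Zq) ^ n * c = 0 := by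
  refine eq_zero_of_forall_stdAddChar_mul_eq_one fun z => ?_
  have hq : (p : Zq) ^ (m + n) = 0 := by exact_mod_cast natCast_self (p ^ (m + n))
  have hα : (p : Zq) ^ m * (p : Zq) ^ (n - m) = (p : Zq) ^ n := by
    rw [← pow_add, Nat.add_sub_cancel' hmn]
  have hβ : ((p : Zq) ^ m) ^ 2 * (p : Zq) ^ (n - m) = 0 := by
    rw [← pow_mul, ← pow_add, show m * 2 + (n - m) = m + n by omega, hq]
  have h := apply_eq_one_of_quadraticSum_ne_zero (isPrimitive_stdAddChar _) h2 hS
    (h := (p : Zq) ^ (n - m) * z) (by linear_combination (d * z) * hβ)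
  rwa [← mul_assoc, mul_right_comm _ c, hα] at h

theorem norm_sum_stdAddChar_translate_le (h2 : IsUnit (2 : Zq)) (hmn : m ≤ n) (hnm : n ≤ 2 * m)
    (a b : Zq) (hb : IsUnit b) (x : (Zq)ˣ) :
    ‖∑ y, stdAddChar (a * ((x : Zq) + (p : Zq) ^ m * y) +
        b * ((x : Zq) + (p : Zq) ^ m * y)⁻¹)‖ ≤
      if (p : Zq) ^ n * (a * (x : Zq) ^ 2 - b) = 0 then p ^ m * √(p ^ (m + n)) else 0 := by
  have hxv : (x : Zq) * (x : Zq)⁻¹ = 1 := mul_inv_of_unit _ x.isUnit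
  rw [sum_stdAddChar_translate_eq_mul_quadraticSum a b hxv (natCast_pow_cube_eq_zero hnm),
    norm_mul, AddChar.norm_apply, one_mul]
  split_ifs with hcond
  · have hd : IsUnit (b * (x : Zq)⁻¹ ^ 3) :=
      hb.mul ((IsUnit.of_mul_eq_one_right _ hxv).pow 3)
    simpa using norm_quadraticSum_natCast_sq_mul_le h2 (pow_pos (Fact.out : p.Prime).pos m) _ hd
  · refine (norm_eq_zero.mpr ?_).le
    by_contra hS
    apply hcond
    have h := pow_mul_eq_zero_of_quadraticSum_ne_zero h2 hmn hS
    linear_combination (x : Zq) ^ 2 * h + (p : Zq) ^ n * b * (x * (x : Zq)⁻¹ + 1) * hxv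

theorem norm_kloos_one_le (hp : p ≠ 2) (hm : 1 ≤ m) (hmn : m ≤ n) (hnm : n ≤ 2 * m)
    (a b : (Zq)ˣ) : ‖Kloos (p ^ (m + n)) a b 1‖ ≤ 2 * √((p : ℝ) ^ (m + n)) := by
  have : IsLocalRing Zq := isLocalRing_prime_pow p (by omega)
  have h2 := isUnit_two_prime_pow hp (m + n)
  have hπ : IsNilpotent ((p : Zq) ^ m) := ⟨3, natCast_pow_cube_eq_zero hnm⟩
  have hpos : 0 < p := (Fact.out : p.Prime).pos
  set B : ℝ := p ^ m * √(p ^ (m + n))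
  set S : Finset (Zq)ˣ := {x | (p : Zq) ^ n * ((a : Zq) * (x : Zq) ^ 2 - b) = 0}
  have hS : #S ≤ 2 * p ^ n :=
    (card_units_filter_mul_sq_sub_le h2 a.isUnit _ _).trans <| Nat.mul_le_mul_left 2 <| by
      exact_mod_cast card_filter_natCast_mul_eq_zero_le _ (pow_pos hpos n)
  have key : (p : ℝ) ^ (m + n) * ‖Kloos (p ^ (m + n)) a b 1‖ ≤
      (p : ℝ) ^ (m + n) * (2 * √((p : ℝ) ^ (m + n))) := calc
    _ = ‖∑ x : (Zq)ˣ, ∑ y, stdAddChar ((a : Zq) * ((x : Zq) + (p : Zq) ^ m * y) +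
          (b : Zq) * ((x : Zq) + (p : Zq) ^ m * y)⁻¹)‖ := by
      rw [Kloos_one_eq, ← card_smul_sum_units_eq_sum_add_mul hπ
        fun z => stdAddChar ((a : Zq) * z + (b : Zq) * z⁻¹), nsmul_eq_mul, norm_mul, ZMod.card]
      simp
    _ ≤ ∑ x : (Zq)ˣ, if x ∈ S then B else 0 :=
      (norm_sum_le _ _).trans (Finset.sum_le_sum fun x _ => by
        simpa [S] using norm_sum_stdAddChar_translate_le h2 hmn hnm a b b.isUnit x)
    _ = #S * B := by rw [Finset.sum_ite_mem, Finset.univ_inter, Finset.sum_const, nsmul_eq_mul]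
    _ ≤ (2 * p ^ n) * B := by gcongr; exact_mod_cast hS
    _ = _ := by ring
  exact le_of_mul_le_mul_left key (pow_pos (mod_cast hpos) _)

end PrimePower

/-- For `q = p^k` with `p` an odd prime and `k ≥ 2`, the untwisted Kloosterman sum
satisfies the Weil-type bound `|K_q(a,b,1)| ≤ 2√q` for all units `a, b` of `ℤ/qℤ`. -/
theorem kloos_bound_trivial_char
    (p k : ℕ) [Fact p.Prime] (hodd : p ≠ 2) (hk : 2 ≤ k)
    (a b : (ZMod (p ^ k))ˣ) :
    ‖Kloos (p ^ k) (a : ZMod (p ^ k)) (b : ZMod (p ^ k))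
        (1 : MulChar (ZMod (p ^ k)) ℂ)‖ ≤ 2 * Real.sqrt (p ^ k) := by
  obtain ⟨m, n, hm, hmn, hnm, rfl⟩ : ∃ m n, 1 ≤ m ∧ m ≤ n ∧ n ≤ 2 * m ∧ k = m + n :=
    ⟨k / 2, k - k / 2, by omega, by omega, by omega, by omega⟩
  exact norm_kloos_one_le hodd hm hmn hnm a b
end

section
/- Let a_1, …, a_r be nonzero integers with |a_i| ≠ |a_j| for i ≠ j, let n_1, …, n_r be nonzero integers, and let σ_1, …, σ_r ∈ {±1}. Then the function t ↦ Σ_{j=1}^r σ_j n_j / √(t² − 4a_j²) is not identically zero on the interval (2·max_j|a_j|, ∞). -/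
/-!
Let `|a_i|` be the (unique) largest of the `|a_j|`. Near `t = 2|a_i|` the `i`-th term
`σ_i n_i / √(t² - 4a_i²)` blows up while all other terms stay bounded, so the sum cannot vanish
just to the right of `2|a_i|`. Concretely, multiplied by `√(t² - 4a_i²)` the sum becomes a function
continuous at `2|a_i|` with value `σ_i n_i ≠ 0` there.
-/

open Finset Filter Topology

lemma continuousAt_sum_div_sqrt_sq_sub_sq {ι : Type*} (s : Finset ι) (c b : ι → ℝ) {t₀ : ℝ}
    (h : ∀ j ∈ s, b j ^ 2 < t₀ ^ 2) :
    ContinuousAt (fun t => ∑ j ∈ s, c j / √(t ^ 2 - b j ^ 2)) t₀ :=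
  tendsto_finsetSum s fun j hj =>
    continuousAt_const.div (by fun_prop) (Real.sqrt_pos.2 (sub_pos.2 (h j hj))).ne'

lemma eventually_sum_div_sqrt_sq_sub_sq_ne_zero {ι : Type*} [Fintype ι] [DecidableEq ι]
    (c b : ι → ℝ) (i : ι) (hb : ∀ j ≠ i, |b j| < |b i|) (hc : c i ≠ 0) :
    ∀ᶠ t in 𝓝[>] |b i|, ∑ j, c j / √(t ^ 2 - b j ^ 2) ≠ 0 := by
  set rest := fun t => ∑ j ∈ univ.erase i, c j / √(t ^ 2 - b j ^ 2)
  have hrest : ContinuousAt rest |b i| :=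
    continuousAt_sum_div_sqrt_sq_sub_sq _ c b fun j hj =>
      sq_lt_sq.2 (by simpa using hb j (ne_of_mem_erase hj))
  have hnum : ContinuousAt (fun t => c i + √(t ^ 2 - b i ^ 2) * rest t) |b i| := by
    fun_prop
  have hnum_ne : ∀ᶠ t in 𝓝 |b i|, c i + √(t ^ 2 - b i ^ 2) * rest t ≠ 0 :=
    hnum.eventually_ne (by simpa using hc)
  filter_upwards [nhdsWithin_le_nhds hnum_ne, self_mem_nhdsWithin] with t ht hti
  have hbt : b i ^ 2 < t ^ 2 := by
    simpa using pow_lt_pow_left₀ hti (abs_nonneg (b i)) two_ne_zero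
  have hpos : 0 < √(t ^ 2 - b i ^ 2) := Real.sqrt_pos.2 (sub_pos.2 hbt)
  rw [← add_sum_erase _ _ (mem_univ i)]
  intro h
  apply ht
  field_simp at h
  linarith

theorem sum_invSqrt_not_identically_zero_general
    (r : ℕ) (hr : 0 < r) (a : Fin r → ℤ)
    (habs : ∀ i j, i ≠ j → |a i| ≠ |a j|)
    (n : Fin r → ℤ) (hn : ∀ i, n i ≠ 0)
    (σ : Fin r → ℤ) (hσ : ∀ i, σ i = 1 ∨ σ i = -1) :
    ∃ t : ℝ, (∀ j : Fin r, 2 * |(a j : ℝ)| < t) ∧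
      (∑ j : Fin r, (σ j : ℝ) * (n j : ℝ) / Real.sqrt (t ^ 2 - 4 * (a j : ℝ) ^ 2)) ≠ 0 := by
  have : Nonempty (Fin r) := ⟨⟨0, hr⟩⟩
  obtain ⟨i, hi⟩ := Finite.exists_max fun j => |a j|
  have hmax : ∀ j ≠ i, |2 * (a j : ℝ)| < |2 * (a i : ℝ)| := fun j hj => by
    simp only [abs_mul, abs_two, ← Int.cast_abs]
    gcongr
    exact_mod_cast (hi j).lt_of_ne (habs j i hj)
  have hc : (σ i : ℝ) * n i ≠ 0 := by
    rcases hσ i with h | h <;> simp [h, hn i]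
  obtain ⟨t, hsum, hti⟩ := ((eventually_sum_div_sqrt_sq_sub_sq_ne_zero
    (fun j => (σ j : ℝ) * n j) _ i hmax hc).and self_mem_nhdsWithin).exists
  refine ⟨t, fun j => ?_, by norm_num [mul_pow] at hsum; exact hsum⟩
  rcases eq_or_ne j i with rfl | hj
  · simpa [abs_mul] using hti
  · simpa [abs_mul] using (hmax j hj).trans hti

/-- **Nonvanishing of `∑ σ_j n_j / √(t² - 4a_j²)`.** For nonzero integers `a₁,…,a_r`
with `|a_i| ≠ |a_j|` for `i ≠ j`, nonzero integers `n₁,…,n_r` and signs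
`σ₁,…,σ_r ∈ {±1}`, the function `t ↦ ∑_j σ_j n_j / √(t² - 4a_j²)` is not identically
zero on `(2·max_j|a_j|, ∞)`, i.e. there is a point `t` of this interval where it is
nonzero. -/
theorem sum_invSqrt_not_identically_zero
    (r : ℕ) (hr : 0 < r) (a : Fin r → ℤ) (ha : ∀ i, a i ≠ 0)
    (habs : ∀ i j, i ≠ j → |a i| ≠ |a j|)
    (n : Fin r → ℤ) (hn : ∀ i, n i ≠ 0)
    (σ : Fin r → ℤ) (hσ : ∀ i, σ i = 1 ∨ σ i = -1) :
    ∃ t : ℝ, (∀ j : Fin r, 2 * |(a j : ℝ)| < t) ∧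
      (∑ j : Fin r, (σ j : ℝ) * (n j : ℝ) / Real.sqrt (t ^ 2 - 4 * (a j : ℝ) ^ 2)) ≠ 0 :=
  sum_invSqrt_not_identically_zero_general r hr a habs n hn σ hσ
end

section
/- Let p be an odd prime, k ≥ 2, and q = p^k, and let a ∈ (ℤ/qℤ)^* be such that a is not a quadratic residue modulo q (equivalently, a mod p is a quadratic nonresidue). Then the untwisted Kloosterman sum vanishes: K_q(a,1,1) = 0, where 1 denotes the trivial multiplicative character of (ℤ/qℤ)^*. -/
/-!
If `m² = 0` in a finite ring, the substitution `x ↦ x(1 + tm)` multiplies each term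
`ψ(ax + bx⁻¹)` by `ψ(t·m(ax − bx⁻¹))`. Averaging over all `t` and using that `ψ` is primitive
kills every term with `m(ax − bx⁻¹) ≠ 0`. For `q = p^k` with `k ≥ 2` take `m = p^(k-1)`:
then `m(ax − x⁻¹) = 0` forces `a ≡ x⁻²` mod `p`, and a square mod `p` lifts to a square
mod `p^k` because the kernel of `(ℤ/p^kℤ)ˣ → (ℤ/pℤ)ˣ` has odd order `p^(k-1)`.
-/

open Complex Finset

lemma isSquare_of_odd_natCard {G : Type*} [Group G] (h : Odd (Nat.card G)) (g : G) :
    IsSquare g :=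
  ⟨(powCoprime (Nat.coprime_two_right.2 h)).symm g, by
    rw [← sq, ← powCoprime_apply (Nat.coprime_two_right.2 h), Equiv.apply_symm_apply]⟩

lemma isSquare_of_isSquare_map {G H : Type*} [CommGroup G] [Group H] {f : G →* H}
    (hf : Function.Surjective f) (hker : Odd (Nat.card f.ker)) {a : G}
    (ha : IsSquare (f a)) : IsSquare a := by
  obtain ⟨v, hv⟩ := ha
  obtain ⟨g, rfl⟩ := hf v
  have hw : a * (g * g)⁻¹ ∈ f.ker := by
    rw [MonoidHom.mem_ker, map_mul, map_inv, map_mul, ← hv, mul_inv_cancel]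
  obtain ⟨s, hs⟩ := isSquare_of_odd_natCard hker ⟨_, hw⟩
  refine ⟨s * g, ?_⟩
  have hs' : a * (g * g)⁻¹ = s * s := congrArg Subtype.val hs
  rw [mul_inv_eq_iff_eq_mul] at hs'
  rw [hs', mul_mul_mul_comm]

lemma ZMod.natCard_ker_unitsMap_prime_pow {p k : ℕ} [Fact p.Prime] (hk : k ≠ 0) :
    Nat.card (ZMod.unitsMap (dvd_pow_self p hk)).ker = p ^ (k - 1) := by
  have hp := (Fact.out : p.Prime)
  have hcard := (ZMod.unitsMap (dvd_pow_self p hk)).ker.card_mul_index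
  rw [Subgroup.index_ker, MonoidHom.range_eq_top_of_surjective _ (ZMod.unitsMap_surjective _),
    Subgroup.card_top, Nat.card_eq_fintype_card (α := (ZMod p)ˣ),
    Nat.card_eq_fintype_card (α := (ZMod (p ^ k))ˣ),
    ZMod.card_units_eq_totient, ZMod.card_units_eq_totient, Nat.totient_prime hp,
    Nat.totient_prime_pow hp (Nat.pos_of_ne_zero hk)] at hcard
  exact Nat.eq_of_mul_eq_mul_right (Nat.sub_pos_of_lt hp.one_lt) hcard

lemma ZMod.isSquare_of_isSquare_unitsMap {p k : ℕ} [Fact p.Prime] (hp : p ≠ 2) (hk : k ≠ 0)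
    {a : (ZMod (p ^ k))ˣ} (ha : IsSquare (ZMod.unitsMap (dvd_pow_self p hk) a)) :
    IsSquare a := by
  refine isSquare_of_isSquare_map (ZMod.unitsMap_surjective _) ?_ ha
  rw [ZMod.natCard_ker_unitsMap_prime_pow hk]
  exact ((Fact.out : p.Prime).odd_of_ne_two hp).pow

lemma ZMod.isSquare_of_castHom_mul_eq_inv {p k : ℕ} [Fact p.Prime] (hp : p ≠ 2) (hk : k ≠ 0)
    {a x : (ZMod (p ^ k))ˣ}
    (h : ZMod.castHom (dvd_pow_self p hk) (ZMod p) (a * x) =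
      ZMod.castHom (dvd_pow_self p hk) (ZMod p) ↑x⁻¹) :
    IsSquare a := by
  set f := ZMod.unitsMap (dvd_pow_self p hk)
  have hax : f (a * x) = f x⁻¹ :=
    Units.ext (by simpa only [f, ZMod.unitsMap_val, ZMod.castHom_apply, Units.val_mul] using h)
  refine ZMod.isSquare_of_isSquare_unitsMap hp hk ⟨f x⁻¹, ?_⟩
  nth_rw 1 [← hax]
  rw [← map_mul, mul_inv_cancel_right]

lemma ZMod.pow_pred_mul_self_eq_zero {p k : ℕ} (hk : 2 ≤ k) :
    (p : ZMod (p ^ k)) ^ (k - 1) * (p : ZMod (p ^ k)) ^ (k - 1) = 0 := by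
  rw [← pow_add, ← Nat.cast_pow, ZMod.natCast_eq_zero_iff]
  exact pow_dvd_pow p (by omega)

lemma ZMod.pow_pred_mul_eq_zero_iff {p k : ℕ} [NeZero p] (hk : k ≠ 0) (c : ZMod (p ^ k)) :
    (p : ZMod (p ^ k)) ^ (k - 1) * c = 0 ↔ ZMod.castHom (dvd_pow_self p hk) (ZMod p) c = 0 := by
  rw [← ZMod.natCast_zmod_val c, map_natCast, ← Nat.cast_pow, ← Nat.cast_mul,
    ZMod.natCast_eq_zero_iff, ZMod.natCast_eq_zero_iff]
  nth_rw 1 [← Nat.pow_pred_mul (Nat.pos_of_ne_zero hk)]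
  rw [Nat.mul_dvd_mul_iff_left (pow_pos (Nat.pos_of_ne_zero (NeZero.ne p)) _)]

section KloostermanVanishing

variable {R : Type*} [CommRing R] [Fintype R] [DecidableEq R]

def unitOneAddMul {m : R} (hm : m * m = 0) (t : R) : Rˣ where
  val := 1 + t * m
  inv := 1 - t * m
  val_inv := by linear_combination (-(t * t)) * hm
  inv_val := by linear_combination (-(t * t)) * hm

lemma sum_units_addChar_eq_sum_mul {ψ : AddChar R ℂ} {m : R} (hm : m * m = 0) (a b t : R) :
    ∑ x : Rˣ, ψ (a * x + b * ↑x⁻¹) =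
      ∑ x : Rˣ, ψ (a * x + b * ↑x⁻¹) * ψ (t * (m * (a * x - b * ↑x⁻¹))) := by
  refine (Fintype.sum_equiv (Equiv.mulRight (unitOneAddMul hm t)) _ _ fun x => ?_).symm
  rw [← AddChar.map_add_eq_mul, Equiv.coe_mulRight, mul_inv_rev, Units.val_mul, Units.val_mul]
  congr 1
  simp only [unitOneAddMul, Units.inv_mk, Units.val_mk]
  ring

theorem sum_units_addChar_eq_zero_of_mul_self_eq_zero {ψ : AddChar R ℂ} (hψ : ψ.IsPrimitive)
    {a b m : R} (hm : m * m = 0) (h : ∀ x : Rˣ, m * (a * x - b * ↑x⁻¹) ≠ 0) :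
    ∑ x : Rˣ, ψ (a * x + b * ↑x⁻¹) = 0 := by
  have hcard : (Fintype.card R : ℂ) ≠ 0 := Nat.cast_ne_zero.2 Fintype.card_ne_zero
  refine (mul_eq_zero.1 ?_).resolve_left hcard
  calc (Fintype.card R : ℂ) * ∑ x : Rˣ, ψ (a * x + b * ↑x⁻¹)
      = ∑ t : R, ∑ x : Rˣ, ψ (a * x + b * ↑x⁻¹) * ψ (t * (m * (a * x - b * ↑x⁻¹))) := by
        simp only [← sum_units_addChar_eq_sum_mul hm, sum_const, card_univ, nsmul_eq_mul]
    _ = ∑ x : Rˣ, ψ (a * x + b * ↑x⁻¹) * ∑ t : R, ψ (t * (m * (a * x - b * ↑x⁻¹))) := by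
        rw [sum_comm]; simp only [mul_sum]
    _ = 0 := sum_eq_zero fun x _ => by
        rw [AddChar.sum_mulShift _ hψ, if_neg (h x), Nat.cast_zero, mul_zero]

end KloostermanVanishing

/-- **Vanishing of untwisted Kloosterman sums at nonresidues.** For `q = p^k` with `p`
an odd prime and `k ≥ 2`, if the unit `a` of `ℤ/qℤ` is not a quadratic residue mod `q`,
then `K_q(a,1,1) = 0`. -/
theorem kloos_eq_zero_of_not_isSquare
    (p k : ℕ) [Fact p.Prime] (hodd : p ≠ 2) (hk : 2 ≤ k)
    (a : (ZMod (p ^ k))ˣ) (ha : ¬ IsSquare ((a : ZMod (p ^ k)))) :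
    Kloos (p ^ k) (a : ZMod (p ^ k)) (1 : ZMod (p ^ k)) (1 : MulChar (ZMod (p ^ k)) ℂ) = 0 := by
  have hk0 : k ≠ 0 := by omega
  simp only [Kloos, MulChar.one_apply_coe, mul_one, eZMod_eq_stdAddChar]
  refine sum_units_addChar_eq_zero_of_mul_self_eq_zero (ZMod.isPrimitive_stdAddChar _)
    (ZMod.pow_pred_mul_self_eq_zero hk) fun x hx => ha ?_
  rw [ZMod.pow_pred_mul_eq_zero_iff hk0, map_sub, sub_eq_zero, one_mul] at hx
  exact (ZMod.isSquare_of_castHom_mul_eq_inv hodd hk0 hx).map (Units.coeHom _)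
end
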